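/- arXiv:2211.06621 — 5 statements merged into one kernel-verified Lean document; each statement's English description precedes it below -/
import Mathlib

section
/- Let 0 < κ_* ≤ κ^* < 1 and let A be a real symmetric d×d matrix with κ_*‖ξ‖² ≤ ξᵀAξ ≤ κ^*‖ξ‖² for all ξ ∈ ℝ^d, and set P := (A⁻¹ − I)⁻¹. Then the matrix P − P(P + κ^*I)⁻¹P − (κ_*(1−κ^*)/((1−κ_*)(2−κ^*)))·I is positive semidefinite; that is, ξᵀ(P − P(P + κ^*I)⁻¹P)ξ ≥ (κ_*(1−κ^*)/((1−κ_*)(2−κ^*)))‖ξ‖² for all ξ ∈ ℝ^d. -/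
open Matrix

section Aux

variable {d : ℕ}

private lemma dp_self_nonneg (x : Fin d → ℝ) : 0 ≤ x ⬝ᵥ x :=
  Finset.sum_nonneg fun i _ => mul_self_nonneg (x i)

private lemma dp_self_pos {x : Fin d → ℝ} (hx : x ≠ 0) : 0 < x ⬝ᵥ x :=
  lt_of_le_of_ne (dp_self_nonneg x)
    (fun h => hx (dotProduct_self_eq_zero.mp h.symm))

/-- Cauchy–Schwarz for the real dot product. -/
private lemma dp_cs (x y : Fin d → ℝ) : (x ⬝ᵥ y) ^ 2 ≤ (x ⬝ᵥ x) * (y ⬝ᵥ y) := by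
  rcases eq_or_ne y 0 with hy | hy
  · simp [hy]
  · have hyy : 0 < y ⬝ᵥ y := dp_self_pos hy
    have h0 : 0 ≤ ((y ⬝ᵥ y) • x - (x ⬝ᵥ y) • y) ⬝ᵥ ((y ⬝ᵥ y) • x - (x ⬝ᵥ y) • y) :=
      dp_self_nonneg _
    simp only [sub_dotProduct, dotProduct_sub, smul_dotProduct,
      dotProduct_smul, smul_eq_mul, dotProduct_comm y x] at h0
    nlinarith [hyy]

/-- If a matrix has positive-definite quadratic form, its determinant is a unit. -/
private lemma isUnit_det_of_form {Q : Matrix (Fin d) (Fin d) ℝ}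
    (h : ∀ x : Fin d → ℝ, x ≠ 0 → 0 < x ⬝ᵥ (Q *ᵥ x)) : IsUnit Q.det := by
  rw [← Matrix.isUnit_iff_isUnit_det]
  rw [← Matrix.mulVec_injective_iff_isUnit]
  intro x y hxy
  by_contra hne
  have hz : x - y ≠ 0 := sub_ne_zero.mpr hne
  have h0 : Q *ᵥ (x - y) = 0 := by rw [Matrix.mulVec_sub, hxy, sub_self]
  have hpos := h (x - y) hz
  rw [h0] at hpos
  simp at hpos

/-- Commutation passes to inverses (given explicit two-sided inverse facts). -/
private lemma comm_inv {X Y : Matrix (Fin d) (Fin d) ℝ} (h : X * Y = Y * X)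
    (h1 : Y * Y⁻¹ = 1) (h2 : Y⁻¹ * Y = 1) : X * Y⁻¹ = Y⁻¹ * X := by
  calc X * Y⁻¹ = Y⁻¹ * Y * X * Y⁻¹ := by rw [h2, one_mul]
  _ = Y⁻¹ * (X * Y) * Y⁻¹ := by rw [h]; noncomm_ring
  _ = Y⁻¹ * X * (Y * Y⁻¹) := by noncomm_ring
  _ = Y⁻¹ * X := by rw [h1, mul_one]


/-- The scalar inequality behind the main estimate. -/
private lemma scalar_key (κs κt u v w : ℝ) (hκs : 0 < κs) (hκst : κs ≤ κt) (hκt : κt < 1)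
    (hv1 : κs * w ≤ v) (hv2 : v ≤ κt * w) (hw0 : 0 ≤ w) (hu0 : 0 ≤ u)
    (hcs : v ^ 2 ≤ w * u) :
    κt * ((1 - κt) * u + κt * v) ≥
      κs * (1 - κt) / ((1 - κs) * (2 - κt)) *
        ((1 - κt) ^ 2 * u + 2 * (κt * (1 - κt)) * v + κt ^ 2 * w) := by
  have hκt0 : 0 < κt := lt_of_lt_of_le hκs hκst
  have h1κt : 0 < 1 - κt := by linarith
  have h1κs : 0 < 1 - κs := by linarith
  set c : ℝ := κs * (1 - κt) / ((1 - κs) * (2 - κt)) with hc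
  have hD : (0 : ℝ) < (1 - κs) * (2 - κt) := by nlinarith
  have hcD : c * ((1 - κs) * (2 - κt)) = κs * (1 - κt) := by
    rw [hc, div_mul_cancel₀ _ hD.ne']
  have hc0 : 0 ≤ c := by positivity
  have ha : 0 ≤ κt - c * (1 - κt) := by
    have h2 : c * ((1 - κs) * (2 - κt)) ≤ κt * ((1 - κs) * (2 - κt)) := by
      rw [hcD]
      nlinarith [mul_nonneg hκt0.le (sq_nonneg (1 - κs)),
        mul_nonneg (sub_nonneg.2 hκst) h1κt.le,
        mul_nonneg hκt0.le (mul_nonneg hκs.le (sub_nonneg.2 hκst))]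
    have hcκt : c ≤ κt := le_of_mul_le_mul_right h2 hD
    nlinarith
  have hkey : c * (κs + κt - κs * κt) ≤ κs * κt := by
    have h2 : c * (κs + κt - κs * κt) * ((1 - κs) * (2 - κt))
        ≤ κs * κt * ((1 - κs) * (2 - κt)) := by
      have h3 : c * (κs + κt - κs * κt) * ((1 - κs) * (2 - κt))
          = κs * (1 - κt) * (κs + κt - κs * κt) := by
        rw [← hcD]; ring
      rw [h3]
      nlinarith [mul_nonneg hκs.le (sub_nonneg.2 hκst)]
    exact le_of_mul_le_mul_right h2 hD
  rcases eq_or_lt_of_le hw0 with hw0' | hwpos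
  · -- w = 0 ⇒ v = 0
    have hv0 : v = 0 := by nlinarith [sq_nonneg v]
    rw [hv0, ← hw0']
    nlinarith [mul_nonneg (mul_nonneg ha h1κt.le) hu0]
  · -- main case
    have hv0 : 0 ≤ v := le_trans (mul_nonneg hκs.le hw0) hv1
    have key1 : 0 ≤ (1 - κt) * v + κt * w := by
      nlinarith [mul_nonneg h1κt.le hv0, mul_nonneg hκt0.le hw0]
    have key2 : 0 ≤ (κt - c * (1 - κt)) * v - c * κt * w := by
      have h1 : (κt - c * (1 - κt)) * (κs * w) ≤ (κt - c * (1 - κt)) * v :=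
        mul_le_mul_of_nonneg_left hv1 ha
      nlinarith [mul_le_mul_of_nonneg_right hkey hw0]
    have prod_nn : 0 ≤ ((1 - κt) * v + κt * w) * ((κt - c * (1 - κt)) * v - c * κt * w) :=
      mul_nonneg key1 key2
    have hα : 0 ≤ (1 - κt) * (κt - c * (1 - κt)) := mul_nonneg h1κt.le ha
    have step : 0 ≤ w * (((1 - κt) * (κt - c * (1 - κt))) * u
        + (κt * κt - 2 * c * κt * (1 - κt)) * v - c * κt ^ 2 * w) := by
      nlinarith [mul_le_mul_of_nonneg_left hcs hα]
    have final : 0 ≤ ((1 - κt) * (κt - c * (1 - κt))) * u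
        + (κt * κt - 2 * c * κt * (1 - κt)) * v - c * κt ^ 2 * w :=
      nonneg_of_mul_nonneg_right step hwpos
    nlinarith [final]

end Aux

/-- Let `0 < κ⋆ ≤ κ⋆⋆ < 1`, `A` real symmetric with `κ⋆‖ξ‖² ≤ ξᵀAξ ≤ κ⋆⋆‖ξ‖²`, and
`P := (A⁻¹ - I)⁻¹`. Then `P - P(P + κ⋆⋆ I)⁻¹P - (κ⋆(1-κ⋆⋆)/((1-κ⋆)(2-κ⋆⋆))) I` is
positive semidefinite: `ξᵀ(P - P(P+κ⋆⋆I)⁻¹P)ξ ≥ (κ⋆(1-κ⋆⋆)/((1-κ⋆)(2-κ⋆⋆)))‖ξ‖²`. -/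
theorem stmt_6 {d : ℕ} (κs κt : ℝ) (hκs : 0 < κs) (hκst : κs ≤ κt) (hκt : κt < 1)
    (A : Matrix (Fin d) (Fin d) ℝ) (hAsymm : A.IsSymm)
    (hbound : ∀ ξ : Fin d → ℝ,
      κs * (ξ ⬝ᵥ ξ) ≤ ξ ⬝ᵥ (A *ᵥ ξ) ∧ ξ ⬝ᵥ (A *ᵥ ξ) ≤ κt * (ξ ⬝ᵥ ξ)) :
    ∀ ξ : Fin d → ℝ,
      ξ ⬝ᵥ (((A⁻¹ - 1)⁻¹ -
          (A⁻¹ - 1)⁻¹ * ((A⁻¹ - 1)⁻¹ + κt • (1 : Matrix (Fin d) (Fin d) ℝ))⁻¹ *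
            (A⁻¹ - 1)⁻¹) *ᵥ ξ) ≥
        κs * (1 - κt) / ((1 - κs) * (2 - κt)) * (ξ ⬝ᵥ ξ) := by
  have hκt0 : 0 < κt := lt_of_lt_of_le hκs hκst
  have h1κt : 0 < 1 - κt := by linarith
  have h1κs : 0 < 1 - κs := by linarith [hκst, hκt]
  set N : Matrix (Fin d) (Fin d) ℝ := 1 - A with hN
  set M : Matrix (Fin d) (Fin d) ℝ := (1 - κt) • A + κt • 1 with hM
  -- units
  have hAdet : IsUnit A.det := by
    apply isUnit_det_of_form
    intro x hx
    have := (hbound x).1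
    have hxx := dp_self_pos hx
    nlinarith
  have hNdet : IsUnit N.det := by
    apply isUnit_det_of_form
    intro x hx
    have h2 := (hbound x).2
    have hxx := dp_self_pos hx
    have : x ⬝ᵥ (N *ᵥ x) = x ⬝ᵥ x - x ⬝ᵥ (A *ᵥ x) := by
      rw [hN, Matrix.sub_mulVec, dotProduct_sub, Matrix.one_mulVec]
    rw [this]
    nlinarith
  have hMdet : IsUnit M.det := by
    apply isUnit_det_of_form
    intro x hx
    have h1 := (hbound x).1
    have hxx := dp_self_pos hx
    have : x ⬝ᵥ (M *ᵥ x) = (1 - κt) * (x ⬝ᵥ (A *ᵥ x)) + κt * (x ⬝ᵥ x) := by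
      rw [hM, Matrix.add_mulVec, dotProduct_add, Matrix.smul_mulVec,
        Matrix.smul_mulVec, Matrix.one_mulVec, dotProduct_smul,
        dotProduct_smul, smul_eq_mul, smul_eq_mul]
    rw [this]
    nlinarith [mul_le_mul_of_nonneg_left h1 h1κt.le, mul_pos hκt0 hxx,
      mul_pos (mul_pos h1κt hκs) hxx]
  have hAA : A * A⁻¹ = 1 := Matrix.mul_nonsing_inv A hAdet
  have hAA' : A⁻¹ * A = 1 := Matrix.nonsing_inv_mul A hAdet
  have hNN : N * N⁻¹ = 1 := Matrix.mul_nonsing_inv N hNdet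
  have hNN' : N⁻¹ * N = 1 := Matrix.nonsing_inv_mul N hNdet
  have hMM : M * M⁻¹ = 1 := Matrix.mul_nonsing_inv M hMdet
  have hMM' : M⁻¹ * M = 1 := Matrix.nonsing_inv_mul M hMdet
  -- cancellation helpers
  have cN : ∀ X : Matrix (Fin d) (Fin d) ℝ, N * (N⁻¹ * X) = X := fun X => by
    rw [← Matrix.mul_assoc, hNN, one_mul]
  have cN' : ∀ X : Matrix (Fin d) (Fin d) ℝ, N⁻¹ * (N * X) = X := fun X => by
    rw [← Matrix.mul_assoc, hNN', one_mul]
  have cM : ∀ X : Matrix (Fin d) (Fin d) ℝ, M * (M⁻¹ * X) = X := fun X => by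
    rw [← Matrix.mul_assoc, hMM, one_mul]
  have cM' : ∀ X : Matrix (Fin d) (Fin d) ℝ, M⁻¹ * (M * X) = X := fun X => by
    rw [← Matrix.mul_assoc, hMM', one_mul]
  -- basic commutations
  have hANc : A * N = N * A := by rw [hN]; noncomm_ring
  have hAMc : A * M = M * A := by
    rw [hM]
    simp only [mul_add, add_mul, mul_smul_comm, smul_mul_assoc, mul_one, one_mul]
  have hNMc : N * M = M * N := by
    rw [hN, sub_mul, mul_sub, one_mul, mul_one, hAMc]
  have hAMi : A * M⁻¹ = M⁻¹ * A := comm_inv hAMc hMM hMM'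
  have hNMi : N * M⁻¹ = M⁻¹ * N := comm_inv hNMc hMM hMM'
  -- B = A⁻¹ - 1 = A⁻¹ * N
  have hB : A⁻¹ - 1 = A⁻¹ * N := by
    rw [hN, mul_sub, mul_one, hAA']
  have hBinv : (A⁻¹ - 1)⁻¹ = N⁻¹ * A := by
    apply Matrix.inv_eq_right_inv
    rw [hB, Matrix.mul_assoc, cN, hAA']
  -- A + κt • N = M
  have hM' : A + κt • N = M := by
    rw [hN, hM]
    module
  -- S⁻¹ = M⁻¹ * N
  have hSinv : ((A⁻¹ - 1)⁻¹ + κt • (1 : Matrix (Fin d) (Fin d) ℝ))⁻¹ = M⁻¹ * N := by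
    apply Matrix.inv_eq_right_inv
    rw [hBinv, ← hNMi, add_mul, smul_mul_assoc, one_mul]
    rw [Matrix.mul_assoc, ← Matrix.mul_assoc A N M⁻¹, hANc, Matrix.mul_assoc N A M⁻¹, cN']
    rw [← smul_mul_assoc, ← add_mul, hM', hMM]
  -- Key simplification: T = κt • (M⁻¹ * A)
  have hT : (A⁻¹ - 1)⁻¹ -
      (A⁻¹ - 1)⁻¹ * ((A⁻¹ - 1)⁻¹ + κt • (1 : Matrix (Fin d) (Fin d) ℝ))⁻¹ *
        (A⁻¹ - 1)⁻¹ = κt • (M⁻¹ * A) := by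
    rw [hSinv, hBinv]
    have e1 : N⁻¹ * A * (M⁻¹ * N) * (N⁻¹ * A) = N⁻¹ * (M⁻¹ * (A * A)) := by
      simp only [Matrix.mul_assoc]
      rw [cN, ← Matrix.mul_assoc A M⁻¹ A, hAMi, Matrix.mul_assoc]
    rw [e1]
    have e2 : N⁻¹ * A = N⁻¹ * (M⁻¹ * (M * A)) := by rw [cM']
    rw [e2, ← mul_sub, ← mul_sub]
    have e3 : M * A - A * A = κt • (N * A) := by
      rw [hM, hN, add_mul, smul_mul_assoc, smul_mul_assoc, one_mul, sub_mul, one_mul]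
      module
    rw [e3, mul_smul_comm, mul_smul_comm]
    congr 1
    rw [← Matrix.mul_assoc M⁻¹ N A, ← hNMi, Matrix.mul_assoc, cN']
  intro ξ
  rw [hT]
  set η : Fin d → ℝ := M⁻¹ *ᵥ ξ with hη
  have hξ : M *ᵥ η = ξ := by
    rw [hη, Matrix.mulVec_mulVec, hMM, Matrix.one_mulVec]
  have hMη : M *ᵥ η = (1 - κt) • (A *ᵥ η) + κt • η := by
    rw [hM, Matrix.add_mulVec, Matrix.smul_mulVec, Matrix.smul_mulVec,
      Matrix.one_mulVec]
  -- rewrite LHS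
  have hLHS : ξ ⬝ᵥ ((κt • (M⁻¹ * A)) *ᵥ ξ)
      = κt * ((1 - κt) * ((A *ᵥ η) ⬝ᵥ (A *ᵥ η)) + κt * (η ⬝ᵥ (A *ᵥ η))) := by
    rw [Matrix.smul_mulVec, dotProduct_smul, smul_eq_mul]
    congr 1
    have h1 : (M⁻¹ * A) *ᵥ ξ = A *ᵥ η := by
      rw [← hAMi, ← Matrix.mulVec_mulVec, ← hη]
    rw [h1]
    conv_lhs => rw [← hξ, hMη]
    simp only [add_dotProduct, smul_dotProduct, smul_eq_mul]
  have hRHS : ξ ⬝ᵥ ξ = (1 - κt) ^ 2 * ((A *ᵥ η) ⬝ᵥ (A *ᵥ η))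
      + 2 * (κt * (1 - κt)) * (η ⬝ᵥ (A *ᵥ η)) + κt ^ 2 * (η ⬝ᵥ η) := by
    conv_lhs => rw [← hξ, hMη]
    simp only [add_dotProduct, dotProduct_add, smul_dotProduct,
      dotProduct_smul, smul_eq_mul, dotProduct_comm (A *ᵥ η) η]
    ring
  rw [hLHS, hRHS]
  exact scalar_key κs κt _ _ _ hκs hκst hκt (hbound η).1 (hbound η).2
    (dp_self_nonneg η) (dp_self_nonneg (A *ᵥ η)) (dp_cs η (A *ᵥ η))
end

section
/- Let 0 < κ_* ≤ κ^* < 1 and let A be a real symmetric d×d matrix with κ_*‖ξ‖² ≤ ξᵀAξ ≤ κ^*‖ξ‖² for all ξ ∈ ℝ^d, and set P := (A⁻¹ − I)⁻¹. Then for all ξ, η ∈ ℝ^d: ξᵀPξ + 2ηᵀPξ + ηᵀ(I + P)η ≥ (1 − κ^*)‖η‖² + (κ_*(1−κ^*)/((1−κ_*)(2−κ^*)))‖ξ‖². -/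
/-!
Since `P = (A⁻¹ - 1)⁻¹ = (1 - A)⁻¹ A` is a function of `A`, the bound `κ⋆ ≤ A` gives
`P - κ⋆/(1-κ⋆) = (1-κ⋆)⁻¹ (1 - A)⁻¹ (A - κ⋆) ≥ 0` as a product of commuting positive semidefinite
matrices. By symmetry of `P` the form equals `(ξ+η)ᵀP(ξ+η) + ‖η‖²`, so with `p = κ⋆/(1-κ⋆)` it is
at least `(1-κ⋆⋆)‖η‖² + p‖ξ+η‖² + κ⋆⋆‖η‖²`, and minimising the last two terms over `η` leaves the
parallel sum `p κ⋆⋆/(p + κ⋆⋆) ‖ξ‖²`, whose coefficient dominates the stated one.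
-/

open Matrix
open scoped MatrixOrder ComplexOrder

theorem parallelSum_mul_dotProduct_self_le {n : Type*} [Fintype n] {a b : ℝ} (hab : 0 < a + b)
    (x y : n → ℝ) :
    a * b / (a + b) * (x ⬝ᵥ x) ≤ a * ((x + y) ⬝ᵥ (x + y)) + b * (y ⬝ᵥ y) := by
  -- `(a + b) (a ‖x + y‖² + b ‖y‖²) - a b ‖x‖² = ‖a (x + y) + b y‖²`
  have hw : 0 ≤ (a • (x + y) + b • y) ⬝ᵥ (a • (x + y) + b • y) := by
    simpa using dotProduct_star_self_nonneg (a • (x + y) + b • y)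
  rw [div_mul_eq_mul_div, div_le_iff₀' hab]
  simp only [add_dotProduct, dotProduct_add, smul_dotProduct, dotProduct_smul, smul_eq_mul,
    dotProduct_comm y x] at hw ⊢
  linear_combination hw

namespace Matrix

variable {n : Type*}

theorem IsSymm.dotProduct_mulVec_comm [Fintype n] {A : Matrix n n ℝ} (hA : A.IsSymm)
    (x y : n → ℝ) : x ⬝ᵥ (A *ᵥ y) = y ⬝ᵥ (A *ᵥ x) := by
  rw [dotProduct_mulVec, ← hA.eq, vecMul_transpose, dotProduct_comm, hA.eq]

theorem PosDef.of_smul_one_le {𝕜 : Type*} [RCLike 𝕜] [DecidableEq n] {A : Matrix n n 𝕜}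
    {κ : ℝ} (hκ : 0 < κ) (h : κ • 1 ≤ A) : A.PosDef := by
  simpa using PosDef.posSemidef_add (le_iff.mp h) (PosDef.one.smul hκ)

variable [Fintype n] [DecidableEq n]

theorem inv_sub_one_inv {α : Type*} [CommRing α] {A : Matrix n n α} (hA : IsUnit A.det) :
    (A⁻¹ - 1)⁻¹ = (1 - A)⁻¹ * A := by
  rw [show A⁻¹ - 1 = A⁻¹ * (1 - A) by rw [mul_sub, mul_one, nonsing_inv_mul A hA],
    mul_inv_rev, nonsing_inv_nonsing_inv A hA]

theorem smul_one_le_inv_sub_one_inv {𝕜 : Type*} [RCLike 𝕜] {A : Matrix n n 𝕜} {κ κ' : ℝ}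
    (hκ : 0 < κ) (hκκ' : κ ≤ κ') (hκ' : κ' < 1) (hκA : κ • 1 ≤ A) (hAκ' : A ≤ κ' • 1) :
    (κ / (1 - κ)) • 1 ≤ (A⁻¹ - 1)⁻¹ := by
  have hκ1 : 0 < 1 - κ := sub_pos.mpr (hκκ'.trans_lt hκ')
  have hA : A.PosDef := .of_smul_one_le hκ hκA
  have hB : (1 - A).PosDef := by
    refine .of_smul_one_le (sub_pos.mpr hκ') ?_
    rw [sub_smul, one_smul]
    exact sub_le_sub_left hAκ' 1
  have hBA : (1 - A)⁻¹ * A = (1 - A)⁻¹ - 1 := by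
    have hBinv := nonsing_inv_mul _ ((isUnit_iff_isUnit_det _).mp hB.isUnit)
    rw [mul_sub, mul_one, sub_eq_iff_eq_add'] at hBinv
    exact eq_sub_of_add_eq hBinv.symm
  have hcomm : Commute (1 - A)⁻¹ (A - κ • 1) := by
    have h : Commute (1 - A) (A - κ • 1) :=
      ((Commute.one_left A).sub_left (Commute.refl A)).sub_right
        ((Commute.one_right _).smul_right κ)
    simpa [coe_units_inv] using h.units_inv_left (u := hB.isUnit.unit)
  have hnonneg : 0 ≤ (1 - A)⁻¹ * (A - κ • 1) :=
    hcomm.mul_nonneg hB.posSemidef.inv.nonneg (le_iff.mp hκA).nonneg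
  have hid : (A⁻¹ - 1)⁻¹ - (κ / (1 - κ)) • 1 = (1 - κ)⁻¹ • ((1 - A)⁻¹ * (A - κ • 1)) := by
    rw [inv_sub_one_inv ((isUnit_iff_isUnit_det _).mp hA.isUnit), mul_sub, mul_smul_comm,
      mul_one, hBA]
    match_scalars <;> field_simp
    ring
  rw [le_iff, hid]
  exact hnonneg.posSemidef.smul (inv_nonneg.mpr hκ1.le)

section Real

variable {A : Matrix n n ℝ}

theorem dotProduct_sub_smul_one_mulVec (x : n → ℝ) (κ : ℝ) :
    x ⬝ᵥ ((A - κ • 1) *ᵥ x) = x ⬝ᵥ (A *ᵥ x) - κ * (x ⬝ᵥ x) := by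
  rw [sub_mulVec, smul_mulVec, one_mulVec, dotProduct_sub, dotProduct_smul, smul_eq_mul]

theorem IsSymm.smul_one_le_iff (hA : A.IsSymm) {κ : ℝ} :
    κ • 1 ≤ A ↔ ∀ x, κ * (x ⬝ᵥ x) ≤ x ⬝ᵥ (A *ᵥ x) := by
  simp only [le_iff, posSemidef_iff_dotProduct_mulVec, star_trivial, dotProduct_sub_smul_one_mulVec,
    sub_nonneg]
  exact and_iff_right (hA.sub (isSymm_one.smul κ))

theorem IsSymm.le_smul_one_iff (hA : A.IsSymm) {κ : ℝ} :
    A ≤ κ • 1 ↔ ∀ x, x ⬝ᵥ (A *ᵥ x) ≤ κ * (x ⬝ᵥ x) := by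
  rw [← neg_le_neg_iff, ← neg_smul, hA.neg.smul_one_le_iff]
  simp only [neg_mulVec, dotProduct_neg, neg_mul, neg_le_neg_iff]

theorem IsSymm.parallelSum_le_blockForm (hA : A.IsSymm) {p κ : ℝ} (hpκ : 0 < p + κ)
    (hpA : p • 1 ≤ A) (ξ η : n → ℝ) :
    (1 - κ) * (η ⬝ᵥ η) + p * κ / (p + κ) * (ξ ⬝ᵥ ξ) ≤
      ξ ⬝ᵥ (A *ᵥ ξ) + 2 * (η ⬝ᵥ (A *ᵥ ξ)) + η ⬝ᵥ ((1 + A) *ᵥ η) := by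
  have hsplit : ξ ⬝ᵥ (A *ᵥ ξ) + 2 * (η ⬝ᵥ (A *ᵥ ξ)) + η ⬝ᵥ ((1 + A) *ᵥ η) =
      (ξ + η) ⬝ᵥ (A *ᵥ (ξ + η)) + η ⬝ᵥ η := by
    simp only [add_mulVec, mulVec_add, one_mulVec, dotProduct_add, add_dotProduct,
      hA.dotProduct_mulVec_comm ξ η]
    ring
  have hlow := hA.smul_one_le_iff.mp hpA (ξ + η)
  have hpar := parallelSum_mul_dotProduct_self_le hpκ ξ η
  linarith

end Real

end Matrix

/-- Let `0 < κ⋆ ≤ κ⋆⋆ < 1`, `A` real symmetric with `κ⋆‖ξ‖² ≤ ξᵀAξ ≤ κ⋆⋆‖ξ‖²`, and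
`P := (A⁻¹ - I)⁻¹`. Then for all `ξ, η ∈ ℝᵈ`:
`ξᵀPξ + 2ηᵀPξ + ηᵀ(I+P)η ≥ (1-κ⋆⋆)‖η‖² + (κ⋆(1-κ⋆⋆)/((1-κ⋆)(2-κ⋆⋆)))‖ξ‖²`. -/
theorem stmt_7 {d : ℕ} (κs κt : ℝ) (hκs : 0 < κs) (hκst : κs ≤ κt) (hκt : κt < 1)
    (A : Matrix (Fin d) (Fin d) ℝ) (hAsymm : A.IsSymm)
    (hbound : ∀ ξ : Fin d → ℝ,
      κs * (ξ ⬝ᵥ ξ) ≤ ξ ⬝ᵥ (A *ᵥ ξ) ∧ ξ ⬝ᵥ (A *ᵥ ξ) ≤ κt * (ξ ⬝ᵥ ξ)) :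
    ∀ ξ η : Fin d → ℝ,
      ξ ⬝ᵥ ((A⁻¹ - 1)⁻¹ *ᵥ ξ) + 2 * (η ⬝ᵥ ((A⁻¹ - 1)⁻¹ *ᵥ ξ)) +
          η ⬝ᵥ ((1 + (A⁻¹ - 1)⁻¹) *ᵥ η) ≥
        (1 - κt) * (η ⬝ᵥ η) + κs * (1 - κt) / ((1 - κs) * (2 - κt)) * (ξ ⬝ᵥ ξ) := by
  intro ξ η
  have hP : (κs / (1 - κs)) • 1 ≤ (A⁻¹ - 1)⁻¹ := smul_one_le_inv_sub_one_inv hκs hκst hκt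
    (hAsymm.smul_one_le_iff.mpr fun x => (hbound x).1)
    (hAsymm.le_smul_one_iff.mpr fun x => (hbound x).2)
  have hPsymm : (A⁻¹ - 1)⁻¹.IsSymm := (hAsymm.inv.sub isSymm_one).inv
  have hκs1 : 0 < 1 - κs := by linarith
  have hp : 0 < κs / (1 - κs) := div_pos hκs hκs1
  have hpκ : 0 < κs / (1 - κs) + κt := by linarith
  have hconst : κs * (1 - κt) / ((1 - κs) * (2 - κt)) ≤
      κs / (1 - κs) * κt / (κs / (1 - κs) + κt) := by
    rw [div_le_div_iff₀ (by nlinarith) hpκ]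
    field_simp
    nlinarith
  have hξ : 0 ≤ ξ ⬝ᵥ ξ := by simpa using dotProduct_star_self_nonneg ξ
  have hform := hPsymm.parallelSum_le_blockForm hpκ hP ξ η
  linarith [mul_le_mul_of_nonneg_right hconst hξ]
end

section
/- Let 1 < κ_* ≤ κ^* < ∞ and let A be a real symmetric d×d matrix with κ_*‖ξ‖² ≤ ξᵀAξ ≤ κ^*‖ξ‖² for all ξ ∈ ℝ^d, and set Q := (A − I)⁻¹. Then there exists a constant C > 0 such that for all ξ, η ∈ ℝ^d: ξᵀ(I + Q)ξ + 2ηᵀQξ + ηᵀQη ≥ C(‖ξ‖² + ‖η‖²). -/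
/-!
Since `Q = (A - 1)⁻¹` is symmetric, the form equals `ξ ⬝ᵥ ξ + (ξ + η) ⬝ᵥ Q (ξ + η)`.
The bound `A - 1 ≤ (κt - 1) • 1` inverts to `Q ≥ (κt - 1)⁻¹ • 1`, and for `0 ≤ c ≤ 1/2`
the elementary inequality `‖ξ‖² + c ‖ξ + η‖² ≥ c/2 (‖ξ‖² + ‖η‖²)` finishes the proof.
-/

open Matrix

namespace Matrix

variable {n : Type*} [Fintype n]

lemma dotProduct_self_nonneg {R : Type*} [Ring R] [LinearOrder R] [IsStrictOrderedRing R]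
    (v : n → R) : 0 ≤ v ⬝ᵥ v :=
  Fintype.sum_nonneg fun i => mul_self_nonneg (v i)

lemma IsSymm.dotProduct_mulVec_comm_s8 {R : Type*} [CommSemiring R] {M : Matrix n n R}
    (hM : M.IsSymm) (x y : n → R) : x ⬝ᵥ (M *ᵥ y) = y ⬝ᵥ (M *ᵥ x) := by
  rw [dotProduct_mulVec, ← mulVec_transpose, hM.eq, dotProduct_comm]

lemma dotProduct_sub_one_mulVec {R : Type*} [CommRing R] [DecidableEq n] (M : Matrix n n R)
    (x : n → R) : x ⬝ᵥ ((M - 1) *ᵥ x) = x ⬝ᵥ (M *ᵥ x) - x ⬝ᵥ x := by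
  rw [sub_mulVec, one_mulVec, dotProduct_sub]

lemma IsSymm.dotProduct_one_add_mulVec_add_eq {R : Type*} [CommRing R] [DecidableEq n]
    {Q : Matrix n n R} (hQ : Q.IsSymm) (ξ η : n → R) :
    ξ ⬝ᵥ ((1 + Q) *ᵥ ξ) + 2 * (η ⬝ᵥ (Q *ᵥ ξ)) + η ⬝ᵥ (Q *ᵥ η) =
      ξ ⬝ᵥ ξ + (ξ + η) ⬝ᵥ (Q *ᵥ (ξ + η)) := by
  simp only [add_mulVec, one_mulVec, mulVec_add, dotProduct_add, add_dotProduct,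
    hQ.dotProduct_mulVec_comm_s8 ξ η]
  ring

lemma posDef_of_mul_dotProduct_self_le {M : Matrix n n ℝ} (hM : M.IsSymm) {c : ℝ} (hc : 0 < c)
    (h : ∀ x, c * (x ⬝ᵥ x) ≤ x ⬝ᵥ (M *ᵥ x)) : M.PosDef := by
  refine .of_dotProduct_mulVec_pos (by simpa [IsHermitian] using hM.eq) fun x hx => ?_
  have hxx : 0 < x ⬝ᵥ x :=
    (dotProduct_self_nonneg x).lt_of_ne' (dotProduct_self_eq_zero.not.2 hx)
  simpa using (mul_pos hc hxx).trans_le (h x)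

/-- The `B`-inner product bound `(x ⬝ᵥ x)² ≤ (x ⬝ᵥ B x) (x ⬝ᵥ B⁻¹ x)` comes from
`0 ≤ v ⬝ᵥ B v` for `v = (x ⬝ᵥ x) • x - (x ⬝ᵥ B x) • B⁻¹ x`. -/
lemma PosDef.inv_mul_dotProduct_self_le_dotProduct_inv_mulVec [DecidableEq n]
    {B : Matrix n n ℝ} (hB : B.PosDef) {L : ℝ} (hL : 0 < L)
    (h : ∀ x, x ⬝ᵥ (B *ᵥ x) ≤ L * (x ⬝ᵥ x)) (x : n → ℝ) :
    L⁻¹ * (x ⬝ᵥ x) ≤ x ⬝ᵥ (B⁻¹ *ᵥ x) := by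
  rcases eq_or_ne x 0 with rfl | hx
  · simp
  have hBsymm : B.IsSymm := (by simpa [IsHermitian] using hB.1 : Bᵀ = B)
  have hBB : ∀ y, B *ᵥ (B⁻¹ *ᵥ y) = y := fun y => by
    rw [mulVec_mulVec, mul_nonsing_inv _ ((isUnit_iff_isUnit_det B).1 hB.isUnit), one_mulVec]
  set b := x ⬝ᵥ x
  set c := x ⬝ᵥ (B *ᵥ x)
  set a := x ⬝ᵥ (B⁻¹ *ᵥ x)
  have hc : 0 < c := by simpa using hB.dotProduct_mulVec_pos hx
  have hb : 0 < b := (dotProduct_self_nonneg x).lt_of_ne' (dotProduct_self_eq_zero.not.2 hx)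
  have hv := hB.posSemidef.dotProduct_mulVec_nonneg (b • x - c • B⁻¹ *ᵥ x)
  rw [star_trivial] at hv
  have hexpand :
      (b • x - c • B⁻¹ *ᵥ x) ⬝ᵥ (B *ᵥ (b • x - c • B⁻¹ *ᵥ x)) = c * (c * a - b ^ 2) := by
    simp only [mulVec_sub, mulVec_smul, hBB, dotProduct_sub, sub_dotProduct, smul_dotProduct,
      dotProduct_smul, smul_eq_mul, hBsymm.dotProduct_mulVec_comm_s8 (B⁻¹ *ᵥ x) x]
    rw [dotProduct_comm (B⁻¹ *ᵥ x) x]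
    ring
  have hca : b ^ 2 ≤ c * a := by nlinarith
  rw [inv_mul_le_iff₀ hL]
  nlinarith [h x]

lemma half_mul_le_dotProduct_self_add_mul {c : ℝ} (hc₀ : 0 ≤ c) (hc : c ≤ 1 / 2) (ξ η : n → ℝ) :
    c / 2 * (ξ ⬝ᵥ ξ + η ⬝ᵥ η) ≤ ξ ⬝ᵥ ξ + c * ((ξ + η) ⬝ᵥ (ξ + η)) := by
  have h := dotProduct_self_nonneg ((2 : ℝ) • ξ + η)
  simp only [dotProduct_add, add_dotProduct, smul_dotProduct, dotProduct_smul, smul_eq_mul,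
    dotProduct_comm η ξ] at h ⊢
  nlinarith [mul_nonneg hc₀ h,
    mul_nonneg (by linarith : 0 ≤ 1 - 3 / 2 * c) (dotProduct_self_nonneg ξ)]

end Matrix

/-- Let `1 < κ⋆ ≤ κ⋆⋆ < ∞`, `A` real symmetric with `κ⋆‖ξ‖² ≤ ξᵀAξ ≤ κ⋆⋆‖ξ‖²`, and
`Q := (A - I)⁻¹`. Then there is `C > 0` such that for all `ξ, η ∈ ℝᵈ`:
`ξᵀ(I+Q)ξ + 2ηᵀQξ + ηᵀQη ≥ C(‖ξ‖² + ‖η‖²)`. -/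
theorem stmt_8 {d : ℕ} (κs κt : ℝ) (hκs : 1 < κs) (hκst : κs ≤ κt)
    (A : Matrix (Fin d) (Fin d) ℝ) (hAsymm : A.IsSymm)
    (hbound : ∀ ξ : Fin d → ℝ,
      κs * (ξ ⬝ᵥ ξ) ≤ ξ ⬝ᵥ (A *ᵥ ξ) ∧ ξ ⬝ᵥ (A *ᵥ ξ) ≤ κt * (ξ ⬝ᵥ ξ)) :
    ∃ C : ℝ, 0 < C ∧ ∀ ξ η : Fin d → ℝ,
      ξ ⬝ᵥ ((1 + (A - 1)⁻¹) *ᵥ ξ) + 2 * (η ⬝ᵥ ((A - 1)⁻¹ *ᵥ ξ)) +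
          η ⬝ᵥ ((A - 1)⁻¹ *ᵥ η) ≥
        C * (ξ ⬝ᵥ ξ + η ⬝ᵥ η) := by
  have hBsymm : (A - 1).IsSymm := hAsymm.sub isSymm_one
  have hBpos : (A - 1).PosDef := posDef_of_mul_dotProduct_self_le hBsymm (sub_pos.2 hκs)
    fun x => by rw [dotProduct_sub_one_mulVec]; linarith [(hbound x).1]
  have hQ := hBpos.inv_mul_dotProduct_self_le_dotProduct_inv_mulVec (by linarith : 0 < κt - 1)
    fun x => by rw [dotProduct_sub_one_mulVec]; linarith [(hbound x).2]
  set c := min (κt - 1)⁻¹ (1 / 2)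
  have hc : 0 < c := lt_min (inv_pos.2 (by linarith)) (by norm_num)
  refine ⟨c / 2, by positivity, fun ξ η => ?_⟩
  rw [ge_iff_le, hBsymm.inv.dotProduct_one_add_mulVec_add_eq]
  calc c / 2 * (ξ ⬝ᵥ ξ + η ⬝ᵥ η) ≤ ξ ⬝ᵥ ξ + c * ((ξ + η) ⬝ᵥ (ξ + η)) :=
        half_mul_le_dotProduct_self_add_mul hc.le (min_le_right _ _) ξ η
    _ ≤ ξ ⬝ᵥ ξ + (κt - 1)⁻¹ * ((ξ + η) ⬝ᵥ (ξ + η)) := by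
        gcongr
        exacts [dotProduct_self_nonneg _, min_le_left _ _]
    _ ≤ ξ ⬝ᵥ ξ + (ξ + η) ⬝ᵥ ((A - 1)⁻¹ *ᵥ (ξ + η)) := by gcongr; exact hQ _
end

section
/- With K and W the block matrices defined in the context (M_P symmetric and invertible), one has the congruence identity W K Wᵀ = [[K̂, F̂, α, 0, 0], [F̂ᵀ, Ĝ, 0, β, 0], [αᵀ, 0, 0, 0, 0], [0, βᵀ, 0, 0, 0], [0, 0, 0, 0, M_P]] with block row/column sizes (n₀, n_e, 1, 1, n_t), where K̂ = K_P − F_P M_P⁻¹ F_Pᵀ, F̂ = F_P M_P⁻¹ G, and Ĝ = −Gᵀ M_P⁻¹ G. -/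
open Matrix

/-- Row/column index of the original GEP matrices: blocks of sizes `(n₀, n_t, n_e, 1, 1)`. -/
abbrev Idx1 (n₀ nt ne : ℕ) := Fin n₀ ⊕ (Fin nt ⊕ (Fin ne ⊕ (Fin 1 ⊕ Fin 1)))

/-- Row index of `W` (and of `W K Wᵀ`): blocks of sizes `(n₀, n_e, 1, 1, n_t)`. -/
abbrev Idx2 (n₀ nt ne : ℕ) := Fin n₀ ⊕ (Fin ne ⊕ (Fin 1 ⊕ (Fin 1 ⊕ Fin nt)))

/-- The block matrix
`K = [[K_P, F_P, 0, α, 0], [F_Pᵀ, M_P, −G, 0, 0], [0, −Gᵀ, 0, 0, β], [αᵀ, 0, 0, 0, 0],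
[0, 0, βᵀ, 0, 0]]` with block sizes `(n₀, n_t, n_e, 1, 1)`. -/
def bigK {n₀ nt ne : ℕ} (KP : Matrix (Fin n₀) (Fin n₀) ℝ)
    (FP : Matrix (Fin n₀) (Fin nt) ℝ) (MP : Matrix (Fin nt) (Fin nt) ℝ)
    (G : Matrix (Fin nt) (Fin ne) ℝ) (α : Fin n₀ → ℝ) (β : Fin ne → ℝ) :
    Matrix (Idx1 n₀ nt ne) (Idx1 n₀ nt ne) ℝ :=
  Matrix.of fun i j =>
    match i, j with
    | .inl i, .inl j => KP i j
    | .inl i, .inr (.inl j) => FP i j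
    | .inl i, .inr (.inr (.inr (.inl _))) => α i
    | .inr (.inl i), .inl j => FPᵀ i j
    | .inr (.inl i), .inr (.inl j) => MP i j
    | .inr (.inl i), .inr (.inr (.inl j)) => -G i j
    | .inr (.inr (.inl i)), .inr (.inl j) => -Gᵀ i j
    | .inr (.inr (.inl i)), .inr (.inr (.inr (.inr _))) => β i
    | .inr (.inr (.inr (.inl _))), .inl j => α j
    | .inr (.inr (.inr (.inr _))), .inr (.inr (.inl j)) => β j
    | _, _ => 0

/-- The block matrix
`W = [[I, −F_P M_P⁻¹, 0, 0, 0], [0, Gᵀ M_P⁻¹, I, 0, 0], [0, 0, 0, 1, 0],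
[0, 0, 0, 0, 1], [0, I, 0, 0, 0]]` with block rows of sizes `(n₀, n_e, 1, 1, n_t)`
and block columns of sizes `(n₀, n_t, n_e, 1, 1)`. -/
noncomputable def bigW {n₀ nt ne : ℕ} (FP : Matrix (Fin n₀) (Fin nt) ℝ)
    (MP : Matrix (Fin nt) (Fin nt) ℝ) (G : Matrix (Fin nt) (Fin ne) ℝ) :
    Matrix (Idx2 n₀ nt ne) (Idx1 n₀ nt ne) ℝ :=
  Matrix.of fun i j =>
    match i, j with
    | .inl i, .inl j => (1 : Matrix (Fin n₀) (Fin n₀) ℝ) i j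
    | .inl i, .inr (.inl j) => (-(FP * MP⁻¹)) i j
    | .inr (.inl i), .inr (.inl j) => (Gᵀ * MP⁻¹) i j
    | .inr (.inl i), .inr (.inr (.inl j)) => (1 : Matrix (Fin ne) (Fin ne) ℝ) i j
    | .inr (.inr (.inl _)), .inr (.inr (.inr (.inl _))) => 1
    | .inr (.inr (.inr (.inl _))), .inr (.inr (.inr (.inr _))) => 1
    | .inr (.inr (.inr (.inr i))), .inr (.inl j) => (1 : Matrix (Fin nt) (Fin nt) ℝ) i j
    | _, _ => 0

/-- The block matrix
`[[K̂, F̂, α, 0, 0], [F̂ᵀ, Ĝ, 0, β, 0], [αᵀ, 0, 0, 0, 0], [0, βᵀ, 0, 0, 0],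
[0, 0, 0, 0, M_P]]` with block sizes `(n₀, n_e, 1, 1, n_t)`, where
`K̂ = K_P − F_P M_P⁻¹ F_Pᵀ`, `F̂ = F_P M_P⁻¹ G` and `Ĝ = −Gᵀ M_P⁻¹ G`. -/
noncomputable def bigKhat {n₀ nt ne : ℕ} (KP : Matrix (Fin n₀) (Fin n₀) ℝ)
    (FP : Matrix (Fin n₀) (Fin nt) ℝ) (MP : Matrix (Fin nt) (Fin nt) ℝ)
    (G : Matrix (Fin nt) (Fin ne) ℝ) (α : Fin n₀ → ℝ) (β : Fin ne → ℝ) :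
    Matrix (Idx2 n₀ nt ne) (Idx2 n₀ nt ne) ℝ :=
  Matrix.of fun i j =>
    match i, j with
    | .inl i, .inl j => (KP - FP * MP⁻¹ * FPᵀ) i j
    | .inl i, .inr (.inl j) => (FP * MP⁻¹ * G) i j
    | .inl i, .inr (.inr (.inl _)) => α i
    | .inr (.inl i), .inl j => (FP * MP⁻¹ * G)ᵀ i j
    | .inr (.inl i), .inr (.inl j) => (-(Gᵀ * MP⁻¹ * G)) i j
    | .inr (.inl i), .inr (.inr (.inr (.inl _))) => β i
    | .inr (.inr (.inl _)), .inl j => α j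
    | .inr (.inr (.inr (.inl _))), .inr (.inl j) => β j
    | .inr (.inr (.inr (.inr i))), .inr (.inr (.inr (.inr j))) => MP i j
    | _, _ => 0


/-- Intermediate product `W K`. -/
noncomputable def bigWK {n₀ nt ne : ℕ} (KP : Matrix (Fin n₀) (Fin n₀) ℝ)
    (FP : Matrix (Fin n₀) (Fin nt) ℝ) (MP : Matrix (Fin nt) (Fin nt) ℝ)
    (G : Matrix (Fin nt) (Fin ne) ℝ) (α : Fin n₀ → ℝ) (β : Fin ne → ℝ) :
    Matrix (Idx2 n₀ nt ne) (Idx1 n₀ nt ne) ℝ :=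
  Matrix.of fun i j =>
    match i, j with
    | .inl i, .inl j => (KP - FP * MP⁻¹ * FPᵀ) i j
    | .inl i, .inr (.inr (.inl j)) => (FP * MP⁻¹ * G) i j
    | .inl i, .inr (.inr (.inr (.inl _))) => α i
    | .inr (.inl i), .inl j => (Gᵀ * MP⁻¹ * FPᵀ) i j
    | .inr (.inl i), .inr (.inr (.inl j)) => (-(Gᵀ * MP⁻¹ * G)) i j
    | .inr (.inl i), .inr (.inr (.inr (.inr _))) => β i
    | .inr (.inr (.inl _)), .inl j => α j
    | .inr (.inr (.inr (.inl _))), .inr (.inr (.inl j)) => β j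
    | .inr (.inr (.inr (.inr i))), .inl j => FPᵀ i j
    | .inr (.inr (.inr (.inr i))), .inr (.inl j) => MP i j
    | .inr (.inr (.inr (.inr i))), .inr (.inr (.inl j)) => (-G) i j
    | _, _ => 0

private lemma sum_mul_transpose {m p : Type*} {n : Type*} [Fintype n]
    (A : Matrix m n ℝ) (B : Matrix p n ℝ) (i : m) (k : p) :
    ∑ x, A i x * B k x = (A * Bᵀ) i k := by
  simp [Matrix.mul_apply]

set_option maxHeartbeats 1600000 in
/-- Congruence identity `W K Wᵀ = K̂ ⊕ M_P` (in the displayed 5×5 block form),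
for `M_P` symmetric and invertible. -/
theorem stmt_12 {n₀ nt ne : ℕ} (KP : Matrix (Fin n₀) (Fin n₀) ℝ)
    (FP : Matrix (Fin n₀) (Fin nt) ℝ) (MP : Matrix (Fin nt) (Fin nt) ℝ)
    (G : Matrix (Fin nt) (Fin ne) ℝ) (α : Fin n₀ → ℝ) (β : Fin ne → ℝ)
    (hMPsymm : MP.IsSymm) (hMP : IsUnit MP) :
    bigW FP MP G * bigK KP FP MP G α β * (bigW FP MP G)ᵀ =
      bigKhat KP FP MP G α β := by
  have hd : IsUnit MP.det := (Matrix.isUnit_iff_isUnit_det MP).mp hMP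
  have h1 : MP⁻¹ * MP = 1 := Matrix.nonsing_inv_mul MP hd
  have h2 : MP * MP⁻¹ = 1 := Matrix.mul_nonsing_inv MP hd
  have hs : MP⁻¹ᵀ = MP⁻¹ := by rw [Matrix.transpose_nonsing_inv, hMPsymm.eq]
  have h1' : ∀ {m : Type} (A : Matrix (Fin nt) m ℝ), MP⁻¹ * (MP * A) = A := by
    intro m A; rw [← Matrix.mul_assoc, h1, Matrix.one_mul]
  have h2' : ∀ {m : Type} (A : Matrix (Fin nt) m ℝ), MP * (MP⁻¹ * A) = A := by
    intro m A; rw [← Matrix.mul_assoc, h2, Matrix.one_mul]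
  have hGFm : Gᵀ * (MP⁻¹ * FPᵀ) = (FP * (MP⁻¹ * G))ᵀ := by
    simp [Matrix.transpose_mul, hs, Matrix.mul_assoc]
  have hGF : ∀ (i : Fin ne) (j : Fin n₀),
      (Gᵀ * (MP⁻¹ * FPᵀ)) i j = (FP * (MP⁻¹ * G)) j i := by
    intro i j; rw [hGFm]; rfl
  have hFM : (FP * MP⁻¹)ᵀ = MP⁻¹ * FPᵀ := by
    rw [Matrix.transpose_mul, hs]
  have hGM : (Gᵀ * MP⁻¹)ᵀ = MP⁻¹ * G := by
    rw [Matrix.transpose_mul, hs, Matrix.transpose_transpose]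
  have step1 : bigW FP MP G * bigK KP FP MP G α β = bigWK KP FP MP G α β := by
    ext i j
    obtain i | i | i | i | i := i <;> obtain j | j | j | j | j := j <;>
    · simp only [bigW, bigK, bigWK, Matrix.of_apply, Matrix.mul_apply,
        Fintype.sum_sum_type, Fin.sum_univ_one, mul_zero, zero_mul,
        Finset.sum_const_zero, add_zero, zero_add, mul_one, one_mul,
        Matrix.neg_apply, neg_mul, mul_neg, neg_neg, Finset.sum_neg_distrib]
      try simp only [← Matrix.mul_apply]
      try simp [Matrix.mul_assoc, h1, h2, h1', h2', hs, Matrix.sub_apply,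
        Matrix.neg_apply, Matrix.neg_mul, Matrix.mul_neg, sub_eq_add_neg,
        Matrix.one_apply]
  have step2 : bigWK KP FP MP G α β * (bigW FP MP G)ᵀ = bigKhat KP FP MP G α β := by
    ext i j
    obtain i | i | i | i | i := i <;> obtain j | j | j | j | j := j <;>
    · rw [Matrix.mul_apply]
      simp only [bigW, bigWK, bigKhat, Matrix.of_apply,
        Matrix.transpose_apply, Fintype.sum_sum_type, Fin.sum_univ_one, mul_zero, zero_mul,
        Finset.sum_const_zero, add_zero, zero_add, mul_one, one_mul,
        Matrix.neg_apply, neg_mul, mul_neg, neg_neg, Finset.sum_neg_distrib]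
      try simp only [sum_mul_transpose]
      try simp [Matrix.transpose_one, hFM, hGM, hs,
        Matrix.mul_assoc, h1, h2, h1', h2', Matrix.sub_apply, Matrix.neg_apply,
        Matrix.neg_mul, Matrix.mul_neg, sub_eq_add_neg, Matrix.one_apply, hGF]
  rw [step1, step2]
end

section
/- With K, M, 𝒦, ℳ the block matrices defined in the context (M_P symmetric and invertible), the generalized eigenvalue problems K z = λ M z and 𝒦 ẑ = λ ℳ ẑ have the same finite eigenvalues: for every λ ∈ ℝ, det(K − λM) = 0 if and only if det(𝒦 − λℳ) = 0. -/
set_option maxHeartbeats 1600000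


open Matrix

/-- Row/column index of the reduced GEP matrices: blocks of sizes `(n₀, n_e, 1, 1)`. -/
abbrev Idx3 (n₀ ne : ℕ) := Fin n₀ ⊕ (Fin ne ⊕ (Fin 1 ⊕ Fin 1))

/-- The block matrix
`M = [[X, 0, Y, 0, 0], [0, 0, 0, 0, 0], [Yᵀ, 0, 0, 0, 0], [0, 0, 0, 0, 0],
[0, 0, 0, 0, 0]]` with block sizes `(n₀, n_t, n_e, 1, 1)`. -/
def bigM {n₀ nt ne : ℕ} (X : Matrix (Fin n₀) (Fin n₀) ℝ)
    (Y : Matrix (Fin n₀) (Fin ne) ℝ) :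
    Matrix (Idx1 n₀ nt ne) (Idx1 n₀ nt ne) ℝ :=
  Matrix.of fun i j =>
    match i, j with
    | .inl i, .inl j => X i j
    | .inl i, .inr (.inr (.inl j)) => Y i j
    | .inr (.inr (.inl i)), .inl j => Yᵀ i j
    | _, _ => 0

/-- The reduced block matrix `𝒦 = [[K̂, F̂, α, 0], [F̂ᵀ, Ĝ, 0, β], [αᵀ, 0, 0, 0],
[0, βᵀ, 0, 0]]` with block sizes `(n₀, n_e, 1, 1)`, where
`K̂ = K_P − F_P M_P⁻¹ F_Pᵀ`, `F̂ = F_P M_P⁻¹ G` and `Ĝ = −Gᵀ M_P⁻¹ G`. -/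
noncomputable def redK {n₀ nt ne : ℕ} (KP : Matrix (Fin n₀) (Fin n₀) ℝ)
    (FP : Matrix (Fin n₀) (Fin nt) ℝ) (MP : Matrix (Fin nt) (Fin nt) ℝ)
    (G : Matrix (Fin nt) (Fin ne) ℝ) (α : Fin n₀ → ℝ) (β : Fin ne → ℝ) :
    Matrix (Idx3 n₀ ne) (Idx3 n₀ ne) ℝ :=
  Matrix.of fun i j =>
    match i, j with
    | .inl i, .inl j => (KP - FP * MP⁻¹ * FPᵀ) i j
    | .inl i, .inr (.inl j) => (FP * MP⁻¹ * G) i j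
    | .inl i, .inr (.inr (.inl _)) => α i
    | .inr (.inl i), .inl j => (FP * MP⁻¹ * G)ᵀ i j
    | .inr (.inl i), .inr (.inl j) => (-(Gᵀ * MP⁻¹ * G)) i j
    | .inr (.inl i), .inr (.inr (.inr _)) => β i
    | .inr (.inr (.inl _)), .inl j => α j
    | .inr (.inr (.inr _)), .inr (.inl j) => β j
    | _, _ => 0

/-- The reduced block matrix `ℳ = [[X, Y, 0, 0], [Yᵀ, 0, 0, 0], [0, 0, 0, 0],
[0, 0, 0, 0]]` with block sizes `(n₀, n_e, 1, 1)`. -/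
def redM {n₀ ne : ℕ} (X : Matrix (Fin n₀) (Fin n₀) ℝ)
    (Y : Matrix (Fin n₀) (Fin ne) ℝ) :
    Matrix (Idx3 n₀ ne) (Idx3 n₀ ne) ℝ :=
  Matrix.of fun i j =>
    match i, j with
    | .inl i, .inl j => X i j
    | .inl i, .inr (.inl j) => Y i j
    | .inr (.inl i), .inl j => Yᵀ i j
    | _, _ => 0


section Aux

variable {n₀ nt ne : ℕ}

/-- Permutation putting the `nt` block first. -/
def auxE (n₀ nt ne : ℕ) : (Fin nt ⊕ Idx3 n₀ ne) ≃ Idx1 n₀ nt ne where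
  toFun := fun x =>
    match x with
    | .inl t => .inr (.inl t)
    | .inr (.inl i) => .inl i
    | .inr (.inr r) => .inr (.inr r)
  invFun := fun x =>
    match x with
    | .inl i => .inr (.inl i)
    | .inr (.inl t) => .inl t
    | .inr (.inr r) => .inr (.inr r)
  left_inv := by rintro (t | i | r) <;> rfl
  right_inv := by rintro (i | t | r) <;> rfl

def auxB (FP : Matrix (Fin n₀) (Fin nt) ℝ) (G : Matrix (Fin nt) (Fin ne) ℝ) :
    Matrix (Fin nt) (Idx3 n₀ ne) ℝ :=
  Matrix.of fun t j =>
    match j with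
    | .inl j => FPᵀ t j
    | .inr (.inl j) => -G t j
    | _ => 0

def auxC (FP : Matrix (Fin n₀) (Fin nt) ℝ) (G : Matrix (Fin nt) (Fin ne) ℝ) :
    Matrix (Idx3 n₀ ne) (Fin nt) ℝ :=
  Matrix.of fun i t =>
    match i with
    | .inl i => FP i t
    | .inr (.inl i) => -Gᵀ i t
    | _ => 0

def auxD (KP X : Matrix (Fin n₀) (Fin n₀) ℝ) (Y : Matrix (Fin n₀) (Fin ne) ℝ)
    (α : Fin n₀ → ℝ) (β : Fin ne → ℝ) (lam : ℝ) :
    Matrix (Idx3 n₀ ne) (Idx3 n₀ ne) ℝ :=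
  Matrix.of fun i j =>
    match i, j with
    | .inl i, .inl j => KP i j - lam * X i j
    | .inl i, .inr (.inl j) => -(lam * Y i j)
    | .inl i, .inr (.inr (.inl _)) => α i
    | .inr (.inl i), .inl j => -(lam * Yᵀ i j)
    | .inr (.inl i), .inr (.inr (.inr _)) => β i
    | .inr (.inr (.inl _)), .inl j => α j
    | .inr (.inr (.inr _)), .inr (.inl j) => β j
    | _, _ => 0

noncomputable def auxCMB (FP : Matrix (Fin n₀) (Fin nt) ℝ)
    (MP : Matrix (Fin nt) (Fin nt) ℝ) (G : Matrix (Fin nt) (Fin ne) ℝ) :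
    Matrix (Idx3 n₀ ne) (Idx3 n₀ ne) ℝ :=
  Matrix.of fun i j =>
    match i, j with
    | .inl i, .inl j => (FP * MP⁻¹ * FPᵀ) i j
    | .inl i, .inr (.inl j) => -((FP * MP⁻¹ * G) i j)
    | .inr (.inl i), .inl j => -((Gᵀ * MP⁻¹ * FPᵀ) i j)
    | .inr (.inl i), .inr (.inl j) => (Gᵀ * MP⁻¹ * G) i j
    | _, _ => 0

lemma auxC_mul_B (FP : Matrix (Fin n₀) (Fin nt) ℝ) (MP : Matrix (Fin nt) (Fin nt) ℝ)
    (G : Matrix (Fin nt) (Fin ne) ℝ) :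
    auxC FP G * MP⁻¹ * auxB FP G = auxCMB FP MP G := by
  ext i j
  rcases i with i | i | i | i <;> rcases j with j | j | j | j <;>
    simp [auxB, auxC, auxCMB, Matrix.mul_apply, mul_neg, neg_mul,
      Finset.sum_neg_distrib]

end Aux

/-- The generalized eigenvalue problems `K z = λ M z` and `𝒦 ẑ = λ ℳ ẑ` have the same
finite eigenvalues: `det(K − λM) = 0 ↔ det(𝒦 − λℳ) = 0` for every real `λ`. -/
theorem stmt_15 {n₀ nt ne : ℕ} (KP : Matrix (Fin n₀) (Fin n₀) ℝ)
    (FP : Matrix (Fin n₀) (Fin nt) ℝ) (MP : Matrix (Fin nt) (Fin nt) ℝ)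
    (G : Matrix (Fin nt) (Fin ne) ℝ)
    (X : Matrix (Fin n₀) (Fin n₀) ℝ) (Y : Matrix (Fin n₀) (Fin ne) ℝ)
    (α : Fin n₀ → ℝ) (β : Fin ne → ℝ)
    (hKPsymm : KP.IsSymm) (hMPsymm : MP.IsSymm) (hMP : IsUnit MP) :
    ∀ lam : ℝ,
      (bigK KP FP MP G α β - lam • bigM X Y).det = 0 ↔
      (redK KP FP MP G α β - lam • redM X Y).det = 0  := by
  intro lam
  haveI : Invertible MP := MP.invertibleOfIsUnitDet ((Matrix.isUnit_iff_isUnit_det MP).mp hMP)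
  have hdet : MP.det ≠ 0 := ((Matrix.isUnit_iff_isUnit_det MP).mp hMP).ne_zero
  have hinvsymm : MP⁻¹ᵀ = MP⁻¹ := by rw [Matrix.transpose_nonsing_inv, hMPsymm.eq]
  have hT : (FP * MP⁻¹ * G)ᵀ = Gᵀ * MP⁻¹ * FPᵀ := by
    rw [Matrix.transpose_mul, Matrix.transpose_mul, hinvsymm, ← Matrix.mul_assoc]
  have hsub : (bigK KP FP MP G α β - lam • bigM X Y).submatrix (auxE n₀ nt ne) (auxE n₀ nt ne)
      = Matrix.fromBlocks MP (auxB FP G) (auxC FP G) (auxD KP X Y α β lam) := by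
    ext i j
    rcases i with i | i | i | i | i <;> rcases j with j | j | j | j | j <;>
      simp [auxE, auxB, auxC, auxD, bigK, bigM, Matrix.fromBlocks,
        Matrix.submatrix_apply, Matrix.sub_apply, Matrix.smul_apply, smul_eq_mul]
  have hT' : ∀ i j, (Gᵀ * MP⁻¹ * FPᵀ) i j = (FP * MP⁻¹ * G) j i := fun i j => by
    rw [← hT, Matrix.transpose_apply]
  have hDred : auxD KP X Y α β lam - auxCMB FP MP G
      = redK KP FP MP G α β - lam • redM X Y := by
    ext i j
    rcases i with i | i | i | i <;> rcases j with j | j | j | j <;>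
      simp [auxD, auxCMB, redK, redM, hT', Matrix.sub_apply, Matrix.smul_apply,
        smul_eq_mul] <;> ring
  have key : (bigK KP FP MP G α β - lam • bigM X Y).det
      = MP.det * (redK KP FP MP G α β - lam • redM X Y).det := by
    rw [← Matrix.det_submatrix_equiv_self (auxE n₀ nt ne), hsub,
      Matrix.det_fromBlocks₁₁, Matrix.invOf_eq_nonsing_inv, auxC_mul_B, hDred]
  rw [key, mul_eq_zero]
  constructor
  · rintro (h | h)
    · exact absurd h hdet
    · exact h
  · exact fun h => Or.inr h
end
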